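/- arXiv:math/0508130 — 2 statements merged into one kernel-verified Lean document; each statement's English description precedes it below -/
import Mathlib

section
/- Let π be a prime, e ≥ 2, and a an integer with a^π ≡ 1 (mod π^e). If j₁, j₂ ∈ {0, ..., π−1} with j₁ ≠ j₂ and both π^(e+2) divides (a + j₁π^e)^π − 1 and π^(e+2) divides (a + j₂π^e)^π − 1, then π divides a. -/
/-- First-order binomial expansion: `x² ∣ (a+x)ⁿ⁺¹ - aⁿ⁺¹ - (n+1)aⁿx`. -/
lemma aux_binom (a x : ℤ) : ∀ n : ℕ,
    x ^ 2 ∣ (a + x) ^ (n + 1) - a ^ (n + 1) - (n + 1) * a ^ n * x := by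
  intro n
  induction n with
  | zero => simp
  | succ n ih =>
    obtain ⟨c, hc⟩ := ih
    refine ⟨(a + x) * c + ((n : ℤ) + 1) * a ^ n, ?_⟩
    push_cast
    linear_combination (a + x) * hc

/-- If a^π ≡ 1 (mod π^e) with e ≥ 2 and two distinct lifts a + jᵢπ^e (0 ≤ jᵢ ≤ π−1)
both satisfy the congruence modulo π^(e+2), then π ∣ a. -/
theorem stmt_2 (π : ℕ) (hπ : π.Prime) (e : ℕ) (he : 2 ≤ e) (a j₁ j₂ : ℤ)
    (ha : (π : ℤ) ^ e ∣ a ^ π - 1)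
    (hj₁ : 0 ≤ j₁) (hj₁' : j₁ ≤ (π : ℤ) - 1)
    (hj₂ : 0 ≤ j₂) (hj₂' : j₂ ≤ (π : ℤ) - 1)
    (hne : j₁ ≠ j₂)
    (h₁ : (π : ℤ) ^ (e + 2) ∣ (a + j₁ * (π : ℤ) ^ e) ^ π - 1)
    (h₂ : (π : ℤ) ^ (e + 2) ∣ (a + j₂ * (π : ℤ) ^ e) ^ π - 1) :
    (π : ℤ) ∣ a := by
  have hπ' : Prime ((π : ℤ)) := Nat.prime_iff_prime_int.mp hπ
  have hπ2 : 2 ≤ π := hπ.two_le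
  obtain ⟨m, hm⟩ : ∃ m : ℕ, π = m + 1 := ⟨π - 1, by omega⟩
  have hmπ : ((m : ℤ) + 1) = (π : ℤ) := by exact_mod_cast hm.symm
  -- the square of jπ^e is divisible by π^(e+2)
  have hsq : ∀ j : ℤ, ((π : ℤ) ^ (e + 2)) ∣ (j * (π : ℤ) ^ e) ^ 2 := by
    intro j
    have h2e : (π : ℤ) ^ (e + 2) ∣ (π : ℤ) ^ (2 * e) := pow_dvd_pow _ (by omega)
    exact dvd_trans h2e ⟨j ^ 2, by ring⟩
  -- linearized congruences
  have key : ∀ j : ℤ, (π : ℤ) ^ (e + 2) ∣ (a + j * (π : ℤ) ^ e) ^ π - 1 →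
      (π : ℤ) ^ (e + 2) ∣ a ^ π - 1 + (π : ℤ) ^ (e + 1) * (a ^ m * j) := by
    intro j hj
    have hb := aux_binom a (j * (π : ℤ) ^ e) m
    have hb' : (π : ℤ) ^ (e + 2) ∣
        (a + j * (π : ℤ) ^ e) ^ (m + 1) - a ^ (m + 1) - (m + 1) * a ^ m * (j * (π : ℤ) ^ e) :=
      dvd_trans (hsq j) hb
    rw [← hm] at hb'
    have heq : a ^ π - 1 + (π : ℤ) ^ (e + 1) * (a ^ m * j)
        = ((a + j * (π : ℤ) ^ e) ^ π - 1)
          - ((a + j * (π : ℤ) ^ e) ^ π - a ^ π - ((m : ℤ) + 1) * a ^ m * (j * (π : ℤ) ^ e)) := by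
      rw [hmπ]; ring
    rw [heq]
    exact dvd_sub hj hb'
  -- subtract the two congruences and cancel π^(e+1)
  have hsub : (π : ℤ) ^ (e + 1) * (π : ℤ) ∣ (π : ℤ) ^ (e + 1) * (a ^ m * (j₁ - j₂)) := by
    have := dvd_sub (key j₁ h₁) (key j₂ h₂)
    have heq : (a ^ π - 1 + (π : ℤ) ^ (e + 1) * (a ^ m * j₁))
        - (a ^ π - 1 + (π : ℤ) ^ (e + 1) * (a ^ m * j₂))
        = (π : ℤ) ^ (e + 1) * (a ^ m * (j₁ - j₂)) := by ring
    rw [heq] at this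
    have hp : (π : ℤ) ^ (e + 2) = (π : ℤ) ^ (e + 1) * (π : ℤ) := by ring
    rwa [hp] at this
  have hππ : (π : ℤ) ^ (e + 1) ≠ 0 := pow_ne_zero _ (by exact_mod_cast hπ.ne_zero)
  have hdvd : (π : ℤ) ∣ a ^ m * (j₁ - j₂) :=
    (mul_dvd_mul_iff_left hππ).mp hsub
  rcases hπ'.dvd_mul.mp hdvd with h | h
  · exact hπ'.dvd_of_dvd_pow h
  · exfalso
    have hz : j₁ - j₂ = 0 := Int.eq_zero_of_abs_lt_dvd h (by
      rw [abs_sub_lt_iff]; constructor <;> omega)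
    exact hne (by omega)
end

section
/- Define φ(x) = (sin(πx)/(2x))² for x ≠ 0 and φ(0) = π²/4. Then φ(x) ≥ 1 for all real x with |x| ≤ 1/2, and the Fourier transform of φ is φ̂(s) = (π²/4)·max(1 − |s|, 0). -/
/-!
Up to the factor π²/4, φ(x) is sinc(πx)², the Fourier transform of the tent function
max(1 - |t|, 0), as a direct integration shows. The tent is continuous and integrable and sinc²
is integrable, so Fourier inversion turns this into the formula for φ̂. The lower bound on
φ is Jordan's inequality sin y ≥ 2y/π on [0, π/2].
-/

open Real

/-- φ(x) = (sin(πx)/(2x))² for x ≠ 0, φ(0) = π²/4. -/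
noncomputable def phiFejer (x : ℝ) : ℝ :=
  if x = 0 then Real.pi ^ 2 / 4 else (Real.sin (Real.pi * x) / (2 * x)) ^ 2

open MeasureTheory FourierTransform Complex Set Function

lemma phiFejer_eq_sinc_sq (x : ℝ) : phiFejer x = π ^ 2 / 4 * sinc (π * x) ^ 2 := by
  rcases eq_or_ne x 0 with rfl | hx
  · simp [phiFejer]
  · rw [phiFejer, if_neg hx, sinc_of_ne_zero (mul_ne_zero pi_ne_zero hx)]
    field_simp
    ring

lemma two_div_pi_le_sinc {x : ℝ} (hx : |x| ≤ π / 2) : 2 / π ≤ sinc x := by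
  wlog h₀ : 0 < x generalizing x
  · rcases (not_lt.1 h₀).lt_or_eq with hneg | rfl
    · rw [← sinc_neg]; exact this (by rwa [abs_neg]) (neg_pos.2 hneg)
    · rw [sinc_zero, div_le_one pi_pos]; linarith [pi_gt_three]
  rw [sinc_of_ne_zero h₀.ne', le_div_iff₀ h₀]
  exact mul_le_sin h₀.le (abs_le.1 hx).2

lemma sinc_sq_le (x : ℝ) : sinc x ^ 2 ≤ 2 / (1 + x ^ 2) := by
  have h₁ : sinc x ^ 2 ≤ 1 := (sq_le_one_iff_abs_le_one _).2 (abs_sinc_le_one x)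
  rw [le_div_iff₀ (by positivity)]
  rcases le_or_gt (x ^ 2) 1 with h | h
  · nlinarith [sq_nonneg (sinc x)]
  · have hx : x ≠ 0 := by rintro rfl; norm_num at h
    have : sinc x ^ 2 * x ^ 2 ≤ 1 := by
      rw [sinc_of_ne_zero hx, div_pow, div_mul_cancel₀ _ (pow_ne_zero 2 hx)]
      exact sin_sq_le_one x
    nlinarith

lemma integrable_sinc_sq : Integrable fun x : ℝ => sinc x ^ 2 := by
  refine (integrable_inv_one_add_sq.const_mul 2).mono' (by fun_prop) (.of_forall fun x => ?_)
  rw [Real.norm_eq_abs, abs_of_nonneg (sq_nonneg _), ← div_eq_mul_inv]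
  exact sinc_sq_le x

noncomputable def tent (t : ℝ) : ℝ := max (1 - |t|) 0

@[fun_prop]
lemma continuous_tent : Continuous tent := by
  unfold tent; fun_prop

lemma tent_neg (t : ℝ) : tent (-t) = tent t := by
  simp [tent]

lemma tent_of_mem_Icc {t : ℝ} (ht : t ∈ Icc (0 : ℝ) 1) : tent t = 1 - t := by
  rw [tent, abs_of_nonneg ht.1, max_eq_left (by linarith [ht.2])]

lemma support_tent : support tent ⊆ Ioo (-1) 1 := by
  intro t ht
  by_contra h
  rw [mem_Ioo, ← abs_lt] at h
  exact ht (max_eq_right (by linarith))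

lemma integrable_tent : Integrable tent :=
  continuous_tent.integrable_of_hasCompactSupport
    (HasCompactSupport.intro' isCompact_Icc isClosed_Icc fun _ ht =>
      notMem_support.1 fun h => ht (Ioo_subset_Icc_self (support_tent h)))

lemma integral_eq_intervalIntegral_add_neg_of_support_subset {E : Type*}
    [NormedAddCommGroup E] [NormedSpace ℝ E] {f : ℝ → E} {a : ℝ} (hf : Continuous f)
    (h : support f ⊆ Ioc (-a) a) :
    ∫ t, f t = ∫ t in 0..a, (f t + f (-t)) := by
  rw [← intervalIntegral.integral_eq_integral_of_support_subset h,
    ← intervalIntegral.integral_add_adjacent_intervals (b := 0) (hf.intervalIntegrable _ _)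
      (hf.intervalIntegrable _ _),
    intervalIntegral.integral_add (hf.intervalIntegrable _ _)
      ((by fun_prop : Continuous fun t => f (-t)).intervalIntegrable _ _),
    intervalIntegral.integral_comp_neg, neg_zero, add_comm]

lemma integral_one_sub_mul_cexp {c : ℂ} (hc : c ≠ 0) :
    ∫ t in (0 : ℝ)..1, (1 - t) * cexp (c * t) = (cexp c - 1 - c) / c ^ 2 := by
  have hderiv (t : ℝ) : HasDerivAt (fun t : ℝ => ((1 - t) / c + 1 / c ^ 2) * cexp (c * t))
      ((1 - t) * cexp (c * t)) t := by
    have hexp : HasDerivAt (fun t : ℝ => cexp (c * t)) (cexp (c * t) * c) t := by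
      simpa using ((hasDerivAt_id (t : ℂ)).const_mul c).cexp.comp_ofReal
    have hlin : HasDerivAt (fun t : ℝ => (1 - (t : ℂ)) / c + 1 / c ^ 2) (-1 / c) t := by
      simpa using
        (((hasDerivAt_id t).ofReal_comp.const_sub 1).div_const c).add_const (1 / c ^ 2)
    refine (hlin.mul hexp).congr_deriv ?_
    field_simp
    ring
  rw [intervalIntegral.integral_eq_sub_of_hasDerivAt (fun t _ => hderiv t)
    (Continuous.intervalIntegrable (by fun_prop) 0 1)]
  simp only [ofReal_one, ofReal_zero, mul_zero, mul_one, Complex.exp_zero]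
  field_simp
  ring

lemma fourier_tent (ξ : ℝ) : 𝓕 (fun t => (tent t : ℂ)) ξ = (sinc (π * ξ) ^ 2 : ℝ) := by
  set c : ℂ := (2 * π * ξ : ℝ) * I with hc_def
  have hsupp :
      support (fun t : ℝ => cexp (↑(-2 * π * t * ξ) * I) • (tent t : ℂ)) ⊆ Ioc (-1) 1 :=
    fun t ht => Ioo_subset_Ioc_self (support_tent fun h => ht (by simp [h]))
  have hintegrand : EqOn (fun t : ℝ => cexp (↑(-2 * π * t * ξ) * I) • (tent t : ℂ) +
      cexp (↑(-2 * π * -t * ξ) * I) • (tent (-t) : ℂ))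
      (fun t : ℝ => (1 - t) * cexp (c * t) + (1 - t) * cexp (-c * t)) (uIcc 0 1) := by
    intro t ht
    rw [uIcc_of_le zero_le_one] at ht
    simp only [tent_neg, tent_of_mem_Icc ht, smul_eq_mul, hc_def]
    push_cast
    ring_nf
  rw [fourier_real_eq_integral_exp_smul,
    integral_eq_intervalIntegral_add_neg_of_support_subset (by fun_prop) hsupp,
    intervalIntegral.integral_congr hintegrand]
  rcases eq_or_ne ξ 0 with rfl | hξ
  · simp only [hc_def, mul_zero, ofReal_zero, zero_mul, Complex.exp_zero, mul_one, neg_zero,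
      sinc_zero, one_pow, ofReal_one]
    simp_rw [← ofReal_one, ← ofReal_sub, ← ofReal_add, intervalIntegral.integral_ofReal,
      ← two_mul]
    norm_num [intervalIntegral.integral_comp_sub_left fun x : ℝ => x, integral_id]
  have hc : c ≠ 0 := by simp [hc_def, hξ, pi_ne_zero]
  rw [intervalIntegral.integral_add (Continuous.intervalIntegrable (by fun_prop) _ _)
    (Continuous.intervalIntegrable (by fun_prop) _ _), integral_one_sub_mul_cexp hc,
    integral_one_sub_mul_cexp (neg_ne_zero.2 hc)]
  have hexp : cexp c + cexp (-c) = 2 - 4 * (Real.sin (π * ξ) : ℂ) ^ 2 := by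
    rw [hc_def, ← neg_mul, ← two_cos, ← ofReal_cos, show 2 * π * ξ = 2 * (π * ξ) by ring,
      Real.cos_two_mul, Real.cos_sq']
    push_cast
    ring
  have hc_sq : c ^ 2 = -(2 * π * ξ : ℂ) ^ 2 := by
    rw [hc_def, mul_pow, I_sq]
    push_cast
    ring
  calc (cexp c - 1 - c) / c ^ 2 + (cexp (-c) - 1 - -c) / (-c) ^ 2
      = (cexp c + cexp (-c) - 2) / c ^ 2 := by ring
    _ = _ := by
      rw [hexp, hc_sq, sinc_of_ne_zero (mul_ne_zero pi_ne_zero hξ)]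
      push_cast
      field_simp
      ring

lemma integral_sinc_sq_mul_cexp (s : ℝ) :
    ∫ y : ℝ, ((sinc (π * y) ^ 2 : ℝ) : ℂ) * cexp (2 * π * I * s * y) = tent s := by
  have hfourier : 𝓕 (fun t => (tent t : ℂ)) = fun ξ => ((sinc (π * ξ) ^ 2 : ℝ) : ℂ) :=
    funext fourier_tent
  have hinv := (by fun_prop : Continuous fun t => (tent t : ℂ)).fourierInv_fourier_eq
    integrable_tent.ofReal (hfourier ▸ (integrable_sinc_sq.comp_mul_left' pi_ne_zero).ofReal)
  rw [← congrFun hinv s, hfourier, fourierInv_eq']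
  congr 1 with y
  simp only [smul_eq_mul, Real.inner_apply]
  push_cast
  ring_nf

lemma one_le_phiFejer {x : ℝ} (hx : |x| ≤ 1 / 2) : 1 ≤ phiFejer x := by
  have hsinc : 2 / π ≤ sinc (π * x) := two_div_pi_le_sinc <| by
    rw [abs_mul, abs_of_pos pi_pos]
    nlinarith [pi_pos]
  calc (1 : ℝ) = π ^ 2 / 4 * (2 / π) ^ 2 := by field_simp; ring
    _ ≤ phiFejer x := by
      rw [phiFejer_eq_sinc_sq]
      gcongr

/-- φ(x) ≥ 1 for |x| ≤ 1/2, and the Fourier transform of φ is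
φ̂(s) = (π²/4)·max(1 − |s|, 0). -/
theorem stmt_18 :
    (∀ x : ℝ, |x| ≤ 1 / 2 → 1 ≤ phiFejer x) ∧
    ∀ s : ℝ,
      (∫ y : ℝ, (phiFejer y : ℂ) * Complex.exp (2 * Real.pi * Complex.I * s * y)) =
        ((Real.pi ^ 2 / 4 * max (1 - |s|) 0 : ℝ) : ℂ) := by
  refine ⟨fun x hx => one_le_phiFejer hx, fun s => ?_⟩
  calc _ = ∫ y : ℝ, ((π ^ 2 / 4 : ℝ) : ℂ) *
        (((sinc (π * y) ^ 2 : ℝ) : ℂ) * cexp (2 * π * I * s * y)) := by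
        simp_rw [phiFejer_eq_sinc_sq, Complex.ofReal_mul, mul_assoc]
    _ = _ := by rw [integral_const_mul, integral_sinc_sq_mul_cexp, tent, Complex.ofReal_mul]
end
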